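/- Every element x of the closed homogeneous cone cl C(A) of a T-algebra A admits a factorization x = tt* with t ∈ T₊ proper, and this proper factorization is unique. -/

import Mathlib

/-- A T-algebra of rank `r` in the sense of Vinberg: a bigraded algebra
`A = ⊕_{i,j} A_{ij}` with involution `conj`, satisfying axioms (a1)–(a7).
`c a i j` denotes the `(i,j)` component of `a`, `e i` the unit of `A_{ii} ≅ ℝ`, and
`ρ i a` the real coordinate of the `(i,i)` component of `a`; the trace is
`tr a = ∑ i, ρ i a` and the inner product is `⟨a,b⟩ = tr (a b*)`. -/
structure TAlgebra (A : Type*) [AddCommGroup A] [Module ℝ A] (r : ℕ) where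
  mul : A →ₗ[ℝ] A →ₗ[ℝ] A
  conj : A →ₗ[ℝ] A
  S : Fin r → Fin r → Submodule ℝ A
  c : A → Fin r → Fin r → A
  e : Fin r → A
  ρ : Fin r → A → ℝ
  -- the bigradation
  c_mem : ∀ a i j, c a i j ∈ S i j
  c_sum : ∀ a, (∑ i, ∑ j, c a i j) = a
  c_unique : ∀ (a : A) (f : Fin r → Fin r → A), (∀ i j, f i j ∈ S i j) →
    (∑ i, ∑ j, f i j) = a → ∀ i j, c a i j = f i j
  grade_mul : ∀ i j k : Fin r, ∀ x ∈ S i j, ∀ y ∈ S j k, mul x y ∈ S i k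
  grade_mul_zero : ∀ i j k l : Fin r, j ≠ k → ∀ x ∈ S i j, ∀ y ∈ S k l, mul x y = 0
  -- the involution
  conj_conj : ∀ a, conj (conj a) = a
  conj_mul : ∀ a b, conj (mul a b) = mul (conj b) (conj a)
  conj_grade : ∀ i j : Fin r, ∀ x ∈ S i j, conj x ∈ S j i
  -- (a1): each `A_{ii}` is a subalgebra isomorphic to `ℝ`, with unit `e i`
  e_mem : ∀ i, e i ∈ S i i
  conj_e : ∀ i, conj (e i) = e i
  e_ne : ∀ i, e i ≠ 0
  diag_coord : ∀ a i, c a i i = ρ i a • e i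
  ρ_e : ∀ i, ρ i (e i) = 1
  e_idem : ∀ i, mul (e i) (e i) = e i
  -- (a2)
  e_mul : ∀ a (i j : Fin r), mul (e i) (c a i j) = c a i j
  mul_e : ∀ a (i j : Fin r), mul (c a j i) (e i) = c a j i
  -- (a3)
  tr_comm : ∀ a b, (∑ i, ρ i (mul a b)) = ∑ i, ρ i (mul b a)
  -- (a4)
  tr_assoc : ∀ a b d, (∑ i, ρ i (mul (mul a b) d)) = ∑ i, ρ i (mul a (mul b d))
  -- (a5)
  tr_nonneg : ∀ a, 0 ≤ ∑ i, ρ i (mul a (conj a))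
  tr_pos : ∀ a, (∑ i, ρ i (mul a (conj a))) = 0 → a = 0
  -- (a6)
  assoc6 : ∀ i j k l : Fin r, i ≤ j → j ≤ k → k ≤ l →
    ∀ x ∈ S i j, ∀ y ∈ S j k, ∀ z ∈ S k l, mul x (mul y z) = mul (mul x y) z
  -- (a7)
  assoc7 : ∀ i j k l : Fin r, i ≤ j → j ≤ k → l ≤ k →
    ∀ x ∈ S i j, ∀ y ∈ S j k, ∀ z ∈ S l k,
      mul x (mul y (conj z)) = mul (mul x y) (conj z)

namespace TAlgebra

variable {A : Type*} [AddCommGroup A] [Module ℝ A] {r : ℕ} (T : TAlgebra A r)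

/-- `t` is upper triangular: all components `t_{ij}` with `j < i` vanish. -/
def UpperTriangular (t : A) : Prop := ∀ i j : Fin r, j < i → T.c t i j = 0

/-- The set `T₊` of upper triangular elements with nonnegative diagonal. -/
def Tplus : Set A := {t | T.UpperTriangular t ∧ ∀ i, 0 ≤ T.ρ i t}

/-- The closed homogeneous cone `cl C(A) = {tt* : t ∈ T₊}`. -/
def clCone : Set A := {x | ∃ t ∈ T.Tplus, x = T.mul t (T.conj t)}

/-- `t ∈ T₊` is proper if `ρ_i(t_{ii}) = 0` implies that the `i`-th column of `t`
vanishes. -/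
def Proper (t : A) : Prop :=
  t ∈ T.Tplus ∧ ∀ i : Fin r, T.ρ i t = 0 → ∀ k : Fin r, T.c t k i = 0

/-- The trace of the T-algebra. -/
def tr (a : A) : ℝ := ∑ i, T.ρ i a

/-- The inner product `⟨a,b⟩ = tr (a b*)` of the T-algebra. -/
def inner' (a b : A) : ℝ := T.tr (T.mul a (T.conj b))

end TAlgebra

namespace TAlgebra

variable {A : Type*} [AddCommGroup A] [Module ℝ A] {r : ℕ} (T : TAlgebra A r)

/-! ### Component calculus -/

lemma mul_sum_sum {ι κ : Type*} (s : Finset ι) (t : Finset κ) (f : ι → A) (g : κ → A) :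
    T.mul (∑ i ∈ s, f i) (∑ j ∈ t, g j) = ∑ i ∈ s, ∑ j ∈ t, T.mul (f i) (g j) := by
  rw [map_sum T.mul f s, LinearMap.coe_sum, Finset.sum_apply]
  exact Finset.sum_congr rfl fun i _ => map_sum _ _ _

lemma c_graded {i j : Fin r} {x : A} (hx : x ∈ T.S i j) :
    ∀ k l, T.c x k l = if k = i then (if l = j then x else 0) else 0 := by
  have hmem : ∀ k l : Fin r, (if k = i then (if l = j then x else 0) else 0) ∈ T.S k l := by
    intro k l
    by_cases hk : k = i
    · by_cases hl : l = j
      · subst hk; subst hl; simpa using hx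
      · simp [hk, hl]
    · simp [hk]
  have hsum : (∑ k, ∑ l, if k = i then (if l = j then x else 0) else 0) = x := by
    simp
  exact T.c_unique x _ hmem hsum

lemma c_self {i j : Fin r} {x : A} (hx : x ∈ T.S i j) : T.c x i j = x := by
  simp [T.c_graded hx]

lemma c_ne_row {i j k l : Fin r} {x : A} (hx : x ∈ T.S i j) (h : k ≠ i) : T.c x k l = 0 := by
  simp [T.c_graded hx, h]

lemma c_ne_col {i j k l : Fin r} {x : A} (hx : x ∈ T.S i j) (h : l ≠ j) : T.c x k l = 0 := by
  simp [T.c_graded hx, h]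

lemma c_zero : ∀ i j, T.c (0 : A) i j = 0 := by
  intro i j
  exact T.c_unique 0 (fun _ _ => 0) (by intro k l; simp) (by simp) i j

lemma c_add (a b : A) : ∀ i j, T.c (a + b) i j = T.c a i j + T.c b i j := by
  have hsum : (∑ i, ∑ j, (T.c a i j + T.c b i j)) = a + b := by
    have : ∀ i : Fin r, (∑ j, (T.c a i j + T.c b i j)) = (∑ j, T.c a i j) + ∑ j, T.c b i j :=
      fun i => Finset.sum_add_distrib
    rw [Finset.sum_congr rfl (fun i _ => this i), Finset.sum_add_distrib, T.c_sum, T.c_sum]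
  exact fun i j => T.c_unique (a + b) (fun i j => T.c a i j + T.c b i j)
    (fun i j => (T.S i j).add_mem (T.c_mem a i j) (T.c_mem b i j)) hsum i j

lemma c_smul (t : ℝ) (a : A) : ∀ i j, T.c (t • a) i j = t • T.c a i j := by
  have hsum : (∑ i, ∑ j, t • T.c a i j) = t • a := by
    have : ∀ i : Fin r, (∑ j, t • T.c a i j) = t • ∑ j, T.c a i j := fun i =>
      (Finset.smul_sum).symm
    rw [Finset.sum_congr rfl (fun i _ => this i), ← Finset.smul_sum, T.c_sum]
  exact fun i j => T.c_unique (t • a) (fun i j => t • T.c a i j)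
    (fun i j => (T.S i j).smul_mem t (T.c_mem a i j)) hsum i j

lemma c_finsum {ι : Type*} (s : Finset ι) (f : ι → A) (i j : Fin r) :
    T.c (∑ m ∈ s, f m) i j = ∑ m ∈ s, T.c (f m) i j := by
  classical
  induction s using Finset.induction with
  | empty => simp [T.c_zero]
  | insert a s hm ih => simp [Finset.sum_insert hm, T.c_add, ih]

lemma c_conj (a : A) (i j : Fin r) : T.c (T.conj a) i j = T.conj (T.c a j i) := by
  have hsum : (∑ i, ∑ j, T.conj (T.c a j i)) = T.conj a := by
    rw [Finset.sum_comm]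
    have : ∀ j : Fin r, (∑ i, T.conj (T.c a j i)) = T.conj (∑ i, T.c a j i) := fun j =>
      (map_sum _ _ _).symm
    rw [Finset.sum_congr rfl (fun j _ => this j), ← map_sum, T.c_sum]
  exact T.c_unique (T.conj a) (fun i j => T.conj (T.c a j i))
    (fun i j => T.conj_grade j i _ (T.c_mem a j i)) hsum i j

lemma c_mul (a b : A) (i j : Fin r) :
    T.c (T.mul a b) i j = ∑ k, T.mul (T.c a i k) (T.c b k j) := by
  have hmem : ∀ i j : Fin r, (∑ k, T.mul (T.c a i k) (T.c b k j)) ∈ T.S i j := fun i j =>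
    sum_mem (fun k _ => T.grade_mul i k j _ (T.c_mem a i k) _ (T.c_mem b k j))
  have hsum : (∑ i, ∑ j, ∑ k, T.mul (T.c a i k) (T.c b k j)) = T.mul a b := by
    conv_rhs => rw [← T.c_sum a, ← T.c_sum b]
    rw [T.mul_sum_sum]
    refine Finset.sum_congr rfl fun i _ => ?_
    have hz : ∀ i' k l : Fin r, k ≠ i' → T.mul (T.c a i k) (T.c b i' l) = 0 := fun i' k l h =>
      T.grade_mul_zero i k i' l h _ (T.c_mem a i k) _ (T.c_mem b i' l)
    calc (∑ j, ∑ k, T.mul (T.c a i k) (T.c b k j))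
        = ∑ k, ∑ j, T.mul (T.c a i k) (T.c b k j) := Finset.sum_comm
      _ = ∑ k, ∑ i', ∑ l, T.mul (T.c a i k) (T.c b i' l) := by
          refine Finset.sum_congr rfl fun k _ => ?_
          rw [Finset.sum_eq_single_of_mem k (Finset.mem_univ k)
            (fun i' _ h => Finset.sum_eq_zero fun l _ => hz i' k l (Ne.symm h))]
      _ = ∑ i', ∑ k, ∑ l, T.mul (T.c a i k) (T.c b i' l) := Finset.sum_comm
      _ = ∑ i', T.mul (∑ k, T.c a i k) (∑ l, T.c b i' l) := by
          refine Finset.sum_congr rfl fun i' _ => (T.mul_sum_sum _ _ _ _).symm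
  exact T.c_unique (T.mul a b) _ hmem hsum i j

end TAlgebra

namespace TAlgebra

variable {A : Type*} [AddCommGroup A] [Module ℝ A] {r : ℕ} (T : TAlgebra A r)

/-! ### scalar lemmas -/

lemma smul_e_inj {i : Fin r} {s t : ℝ} (h : s • T.e i = t • T.e i) : s = t := by
  by_contra hne
  have : (s - t) • T.e i = 0 := by rw [sub_smul, h, sub_self]
  rcases smul_eq_zero.1 this with h' | h'
  · exact hne (by linarith [sub_eq_zero.1 (by linarith [h'] : s - t = 0)])
  · exact T.e_ne i h'

lemma ρ_eq_of_c {i : Fin r} {a : A} {t : ℝ} (h : T.c a i i = t • T.e i) : T.ρ i a = t :=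
  T.smul_e_inj (by rw [← T.diag_coord]; exact h)

lemma ρ_graded_ne {i j k : Fin r} {x : A} (hx : x ∈ T.S i j) (h : ¬(k = i ∧ k = j)) :
    T.ρ k x = 0 := by
  refine T.ρ_eq_of_c ?_
  rw [zero_smul]
  by_cases hk : k = i
  · exact T.c_ne_col hx (fun hc => h ⟨hk, hc⟩)
  · exact T.c_ne_row hx hk

lemma graded_diag {i : Fin r} {x : A} (hx : x ∈ T.S i i) : x = T.ρ i x • T.e i := by
  rw [← T.diag_coord, T.c_self hx]

/-- the action of the idempotents -/
lemma e_mul' {i j : Fin r} {x : A} (hx : x ∈ T.S i j) : T.mul (T.e i) x = x := by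
  have := T.e_mul x i j; rwa [T.c_self hx] at this

lemma mul_e' {i j : Fin r} {x : A} (hx : x ∈ T.S i j) : T.mul x (T.e j) = x := by
  have := T.mul_e x j i
  rwa [T.c_self hx] at this

/-! ### The squared norm -/

/-- `tr (v v*)`. -/
def nsq (v : A) : ℝ := ∑ k, T.ρ k (T.mul v (T.conj v))

lemma nsq_nonneg (v : A) : 0 ≤ T.nsq v := T.tr_nonneg v

lemma nsq_eq_zero {v : A} (h : T.nsq v = 0) : v = 0 := T.tr_pos v h

lemma nsq_graded {i j : Fin r} {v : A} (hv : v ∈ T.S i j) :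
    T.mul v (T.conj v) = T.nsq v • T.e i := by
  have hm : T.mul v (T.conj v) ∈ T.S i i := T.grade_mul i j i _ hv _ (T.conj_grade _ _ _ hv)
  have h1 : T.mul v (T.conj v) = T.ρ i (T.mul v (T.conj v)) • T.e i := T.graded_diag hm
  have h2 : T.nsq v = T.ρ i (T.mul v (T.conj v)) := by
    unfold nsq
    rw [Finset.sum_eq_single_of_mem i (Finset.mem_univ i)
      (fun k _ hk => T.ρ_graded_ne hm (fun hc => hk hc.1))]
  rw [h2, ← h1]

lemma nsq_conj (v : A) : T.nsq (T.conj v) = T.nsq v := by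
  unfold nsq
  rw [show T.mul (T.conj v) (T.conj (T.conj v)) = T.mul (T.conj v) v from by rw [T.conj_conj]]
  exact T.tr_comm (T.conj v) v

lemma conj_mul_self {i j : Fin r} {v : A} (hv : v ∈ T.S i j) :
    T.mul (T.conj v) v = T.nsq v • T.e j := by
  have := T.nsq_graded (T.conj_grade _ _ _ hv)
  rw [T.conj_conj, T.nsq_conj] at this
  exact this

lemma nsq_e (i : Fin r) : T.nsq (T.e i) = 1 := by
  have := T.nsq_graded (T.e_mem i)
  rw [T.conj_e, T.e_idem] at this
  have : (1 : ℝ) • T.e i = T.nsq (T.e i) • T.e i := by rw [one_smul]; exact this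
  exact (T.smul_e_inj this).symm

lemma ρ_smul (t : ℝ) (a : A) (k : Fin r) : T.ρ k (t • a) = t * T.ρ k a := by
  refine T.ρ_eq_of_c ?_
  rw [T.c_smul, T.diag_coord, smul_smul]

lemma ρ_add (a b : A) (k : Fin r) : T.ρ k (a + b) = T.ρ k a + T.ρ k b := by
  refine T.ρ_eq_of_c ?_
  rw [T.c_add, T.diag_coord, T.diag_coord, add_smul]

lemma ρ_zero (k : Fin r) : T.ρ k (0 : A) = 0 :=
  T.ρ_eq_of_c (by rw [T.c_zero, zero_smul])

lemma nsq_smul (t : ℝ) (v : A) : T.nsq (t • v) = t^2 * T.nsq v := by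
  unfold nsq
  rw [Finset.mul_sum]
  refine Finset.sum_congr rfl fun k _ => ?_
  rw [map_smul, map_smul, LinearMap.smul_apply, map_smul, smul_smul, T.ρ_smul]
  ring

end TAlgebra

namespace TAlgebra

variable {A : Type*} [AddCommGroup A] [Module ℝ A] {r : ℕ} (T : TAlgebra A r)

/-- conjugated form of axiom (a7): `(z y*) x* = z (y* x*)`. -/
lemma assoc7' (i j k l : Fin r) (hij : i ≤ j) (hjk : j ≤ k) (hlk : l ≤ k)
    (x : A) (hx : x ∈ T.S i j) (y : A) (hy : y ∈ T.S j k) (z : A) (hz : z ∈ T.S l k) :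
    T.mul (T.mul z (T.conj y)) (T.conj x) = T.mul z (T.mul (T.conj y) (T.conj x)) := by
  have h := congrArg T.conj (T.assoc7 i j k l hij hjk hlk x hx y hy z hz)
  rw [T.conj_mul, T.conj_mul, T.conj_conj, T.conj_mul, T.conj_mul, T.conj_conj] at h
  exact h

end TAlgebra

/-- The element determined by a "column" function. -/
def TAlgebra.colv {A : Type*} [AddCommGroup A] [Module ℝ A] {r : ℕ} (g : Fin r → A) : A :=
  ∑ a, g a

namespace TAlgebra

variable {A : Type*} [AddCommGroup A] [Module ℝ A] {r : ℕ} (T : TAlgebra A r)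

/-- `u u*`. -/
def sq (u : A) : A := T.mul u (T.conj u)

lemma sq_zero : T.sq (0 : A) = 0 := by
  unfold sq; rw [map_zero, LinearMap.zero_apply]

lemma colv_zero : colv (fun _ : Fin r => (0 : A)) = 0 := by
  unfold TAlgebra.colv; simp

lemma sq_colv (g h : Fin r → A) :
    T.mul (colv g) (T.conj (colv h)) = ∑ a, ∑ b, T.mul (g a) (T.conj (h b)) := by
  unfold TAlgebra.colv
  rw [map_sum T.conj, T.mul_sum_sum]

lemma mul_colv_zero {j j' : Fin r} (hne : j ≠ j') (g h : Fin r → A)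
    (hg : ∀ a, g a ∈ T.S a j) (hh : ∀ a, h a ∈ T.S a j') :
    T.mul (colv g) (T.conj (colv h)) = 0 := by
  rw [T.sq_colv]
  refine Finset.sum_eq_zero fun a _ => Finset.sum_eq_zero fun b _ => ?_
  exact T.grade_mul_zero a j j' b hne _ (hg a) _ (T.conj_grade _ _ _ (hh b))

lemma sq_add (u w : A) (h : T.mul u (T.conj w) = 0) : T.sq (u + w) = T.sq u + T.sq w := by
  have h' : T.mul w (T.conj u) = 0 := by
    have := congrArg T.conj h
    rw [T.conj_mul, T.conj_conj, map_zero] at this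
    exact this
  unfold sq
  simp only [map_add, LinearMap.add_apply, h, h']
  abel

end TAlgebra

namespace TAlgebra

variable {A : Type*} [AddCommGroup A] [Module ℝ A] {r : ℕ} (T : TAlgebra A r)

/-- The key rank-one-update ("Givens rotation") step: a column `cc` sitting at column
index `R'` (with nonnegative diagonal `α`) together with the square of a column `g` at
column index `j` can be rewritten as the square of a new column `p` at `R'` (with
nonnegative diagonal) plus squares of two columns at `j` supported on rows `< R'`. -/
lemma rotation (R' j : Fin r) (cc g : Fin r → A) (α : ℝ) (hα : 0 ≤ α)
    (hcmem : ∀ a, cc a ∈ T.S a R') (hcd : cc R' = α • T.e R')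
    (hc0 : ∀ a, ¬ a ≤ R' → cc a = 0)
    (hgmem : ∀ a, g a ∈ T.S a j) (hg0 : ∀ a, ¬ a ≤ R' → g a = 0)
    (hgj : ∀ a : Fin r, ¬ a ≤ j → g a = 0)
    (hRj : g R' ≠ 0 → R' ≤ j) :
    ∃ (p E' D : Fin r → A) (β lam : ℝ), 0 ≤ β ∧ 0 ≤ lam ∧ β ^ 2 = α ^ 2 + lam ∧
      (∀ a, p a ∈ T.S a R') ∧ p R' = β • T.e R' ∧ (∀ a, ¬ a ≤ R' → p a = 0) ∧
      (∀ a, E' a ∈ T.S a j) ∧ (∀ a : Fin r, ¬ a < R' → E' a = 0) ∧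
      (∀ a, D a ∈ T.S a j) ∧ (∀ a : Fin r, ¬ a < R' → D a = 0) ∧
      (∀ a : Fin r, ¬ a ≤ j → E' a = 0 ∧ D a = 0) ∧
      (lam = 0 → p = cc) ∧
      T.sq (colv p) + (T.sq (colv E') + T.sq (colv D))
        = T.sq (colv cc) + T.sq (colv g) := by
  by_cases hv : g R' = 0
  · -- trivial case: nothing to rotate
    refine ⟨cc, g, fun _ => 0, α, 0, hα, le_refl 0, by ring, hcmem, hcd, hc0, hgmem,
      ?_, fun a => (T.S a j).zero_mem, fun _ _ => rfl, fun a ha => ⟨hgj a ha, rfl⟩,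
      fun _ => rfl, ?_⟩
    · intro a ha
      rcases eq_or_lt_of_le (le_of_not_gt (by simpa using ha) : R' ≤ a) with h | h
      · rw [← h]; exact hv
      · exact hg0 a (not_le_of_gt h)
    · rw [colv_zero, T.sq_zero]
      abel
  · -- main case
    have hRj' : R' ≤ j := hRj hv
    set v : A := g R' with hv_def
    have hvmem : v ∈ T.S R' j := hgmem R'
    have hlam0 : T.nsq v ≠ 0 := fun h => hv (T.nsq_eq_zero h)
    have hlam : 0 < T.nsq v := lt_of_le_of_ne (T.nsq_nonneg v) (Ne.symm hlam0)
    set lam : ℝ := T.nsq v with hlam_def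
    set β : ℝ := Real.sqrt (α ^ 2 + lam) with hβ_def
    have hβ2 : β ^ 2 = α ^ 2 + lam := Real.sq_sqrt (by positivity)
    have hβpos : 0 < β := Real.sqrt_pos.2 (by positivity)
    have hβ0 : β ≠ 0 := ne_of_gt hβpos
    have hvv : T.mul v (T.conj v) = lam • T.e R' := T.nsq_graded hvmem
    -- definitions
    set E : Fin r → A := fun a => lam⁻¹ • T.mul (T.mul (g a) (T.conj v)) v with hE_def
    set p : Fin r → A := fun a => β⁻¹ • (α • cc a + T.mul (g a) (T.conj v)) with hp_def
    set E' : Fin r → A := fun a => β⁻¹ • (α • E a - T.mul (cc a) v) with hE'_def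
    set D : Fin r → A := fun a => g a - E a with hD_def
    -- memberships
    have hximem : ∀ a, T.mul (g a) (T.conj v) ∈ T.S a R' := fun a =>
      T.grade_mul a j R' _ (hgmem a) _ (T.conj_grade _ _ _ hvmem)
    have hEmem : ∀ a, E a ∈ T.S a j := fun a =>
      (T.S a j).smul_mem _ (T.grade_mul a R' j _ (hximem a) _ hvmem)
    have hpmem : ∀ a, p a ∈ T.S a R' := fun a =>
      (T.S a R').smul_mem _ ((T.S a R').add_mem ((T.S a R').smul_mem _ (hcmem a)) (hximem a))
    have hcvmem : ∀ a, T.mul (cc a) v ∈ T.S a j := fun a =>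
      T.grade_mul a R' j _ (hcmem a) _ hvmem
    have hE'mem : ∀ a, E' a ∈ T.S a j := fun a =>
      (T.S a j).smul_mem _ ((T.S a j).sub_mem ((T.S a j).smul_mem _ (hEmem a)) (hcvmem a))
    have hDmem : ∀ a, D a ∈ T.S a j := fun a => (T.S a j).sub_mem (hgmem a) (hEmem a)
    -- diagonal values
    have hER : E R' = v := by
      rw [hE_def]
      simp only
      rw [← hv_def, hvv, map_smul, LinearMap.smul_apply, T.e_mul' hvmem, smul_smul,
        inv_mul_cancel₀ hlam0, one_smul]
    have hpR : p R' = β • T.e R' := by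
      rw [hp_def]
      simp only
      rw [← hv_def, hvv, hcd, smul_smul, ← add_smul, smul_smul]
      congr 1
      rw [show α * α + lam = β ^ 2 from by rw [hβ2]; ring]
      field_simp
    have hcRv : T.mul (cc R') v = α • v := by
      rw [hcd, map_smul, LinearMap.smul_apply, T.e_mul' hvmem]
    have hE'R : E' R' = 0 := by
      rw [hE'_def]
      simp only
      rw [hER, hcRv, sub_self, smul_zero]
    have hDR : D R' = 0 := by rw [hD_def]; simp only; rw [hER, ← hv_def, sub_self]
    -- vanishing rows
    have hz : ∀ a, ¬ a ≤ R' → E a = 0 ∧ p a = 0 ∧ E' a = 0 ∧ D a = 0 := by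
      intro a ha
      have h1 : g a = 0 := hg0 a ha
      have h2 : cc a = 0 := hc0 a ha
      have hE0 : E a = 0 := by
        rw [hE_def]; simp only [h1]
        rw [map_zero, LinearMap.zero_apply, map_zero, LinearMap.zero_apply, smul_zero]
      refine ⟨hE0, ?_, ?_, ?_⟩
      · rw [hp_def]; simp only [h1, h2]
        rw [map_zero, LinearMap.zero_apply, smul_zero, zero_add, smul_zero]
      · rw [hE'_def]; simp only [hE0, h2]
        rw [map_zero, LinearMap.zero_apply, smul_zero, sub_zero, smul_zero]
      · rw [hD_def]; simp only [h1, hE0, sub_zero]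
    have hElt : ∀ a : Fin r, ¬ a < R' → E' a = 0 := by
      intro a ha
      by_cases h : a = R'
      · rw [h]; exact hE'R
      · exact (hz a (fun hle => h (le_antisymm hle (le_of_not_gt (by
          intro hlt
          exact ha hlt))))).2.2.1
    have hDlt : ∀ a : Fin r, ¬ a < R' → D a = 0 := by
      intro a ha
      by_cases h : a = R'
      · rw [h]; exact hDR
      · refine (hz a fun hle => h (le_antisymm hle ?_)).2.2.2
        exact le_of_not_gt fun hlt => ha hlt
    refine ⟨p, E', D, β, lam, le_of_lt hβpos, le_of_lt hlam, hβ2, hpmem, hpR,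
      fun a ha => (hz a ha).2.1, hE'mem, hElt, hDmem, hDlt,
      fun a ha => ⟨(hz a fun h => ha (le_trans h hRj')).2.2.1,
        (hz a fun h => ha (le_trans h hRj')).2.2.2⟩,
      fun h => absurd h hlam0, ?_⟩
    -- pointwise definition lemmas
    have hEa : ∀ a, E a = lam⁻¹ • T.mul (T.mul (g a) (T.conj v)) v := fun a => by rw [hE_def]
    have hpa : ∀ a, p a = β⁻¹ • (α • cc a + T.mul (g a) (T.conj v)) := fun a => by rw [hp_def]
    have hE'a : ∀ a, E' a = β⁻¹ • (α • E a - T.mul (cc a) v) := fun a => by rw [hE'_def]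
    have hDa : ∀ a, D a = g a - E a := fun a => by rw [hD_def]
    -- the main identity, proved termwise
    have key : ∀ a b : Fin r,
        T.mul (p a) (T.conj (p b)) +
          (T.mul (E' a) (T.conj (E' b)) + T.mul (D a) (T.conj (D b)))
        = T.mul (cc a) (T.conj (cc b)) + T.mul (g a) (T.conj (g b)) := by
      intro a b
      by_cases ha : a ≤ R'
      · by_cases hb : b ≤ R'
        · -- the real computation
          have haj : a ≤ j := le_trans ha hRj'
          have hbj : b ≤ j := le_trans hb hRj'
          -- abbreviations for atoms
          -- micro-identity h3 : (E a) v* = (g a) v*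
          have h3 : ∀ a : Fin r, a ≤ R' → T.mul (E a) (T.conj v) = T.mul (g a) (T.conj v) := by
            intro a ha
            rw [hEa a, map_smul, LinearMap.smul_apply,
              ← T.assoc7 a R' j R' ha hRj' hRj' _ (hximem a) v hvmem v hvmem,
              hvv, map_smul, T.mul_e' (hximem a), smul_smul, inv_mul_cancel₀ hlam0, one_smul]
          -- conj of E b
          have hcE : T.conj (E b) = lam⁻¹ • T.mul (T.conj v) (T.mul v (T.conj (g b))) := by
            rw [hEa b, map_smul, T.conj_mul, T.conj_mul, T.conj_conj]
          -- master lemma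
          have h5 : ∀ (X : A) (a' : Fin r), X ∈ T.S a' j → a' ≤ j →
              T.mul X (T.conj (E b))
                = lam⁻¹ • T.mul (T.mul X (T.conj v)) (T.mul v (T.conj (g b))) := by
            intro X a' hX ha'
            rw [hcE, map_smul]
            congr 1
            have h := T.assoc7' b R' j a' hb hRj' ha'
              (T.mul (g b) (T.conj v)) (hximem b) v hvmem X hX
            rw [T.conj_mul, T.conj_conj] at h
            exact h.symm
          have h7 : T.mul (cc a) (T.mul v (T.conj (g b)))
              = T.mul (T.mul (cc a) v) (T.conj (g b)) :=
            T.assoc7 a R' j b ha hRj' hbj (cc a) (hcmem a) v hvmem (g b) (hgmem b)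
          have h9b : T.mul (T.mul (cc a) v) (T.conj v) = lam • cc a := by
            rw [← T.assoc7 a R' j R' ha hRj' hRj' (cc a) (hcmem a) v hvmem v hvmem,
              hvv, map_smul, T.mul_e' (hcmem a)]
          have h9 : T.mul (T.mul (cc a) v) (T.mul (T.conj v) (T.conj (cc b)))
              = lam • T.mul (cc a) (T.conj (cc b)) := by
            rw [← T.assoc7' b R' j a hb hRj' haj (cc b) (hcmem b) v hvmem
              (T.mul (cc a) v) (hcvmem a), h9b, map_smul, LinearMap.smul_apply]
          have h10 : T.mul (E a) (T.mul (T.conj v) (T.conj (cc b)))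
              = T.mul (T.mul (g a) (T.conj v)) (T.conj (cc b)) := by
            rw [← T.assoc7' b R' j a hb hRj' haj (cc b) (hcmem b) v hvmem (E a) (hEmem a),
              h3 a ha]
          have h11 : T.mul (T.mul (cc a) v) (T.conj (E b))
              = T.mul (T.mul (cc a) v) (T.conj (g b)) := by
            rw [h5 (T.mul (cc a) v) a (hcvmem a) haj, h9b, map_smul, LinearMap.smul_apply,
              smul_smul, inv_mul_cancel₀ hlam0, one_smul, h7]
          have h12 : T.mul (E a) (T.conj (E b))
              = lam⁻¹ • T.mul (T.mul (g a) (T.conj v)) (T.mul v (T.conj (g b))) := by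
            rw [h5 (E a) a (hEmem a) haj, h3 a ha]
          have h13 : T.mul (g a) (T.conj (E b))
              = lam⁻¹ • T.mul (T.mul (g a) (T.conj v)) (T.mul v (T.conj (g b))) :=
            h5 (g a) a (hgmem a) haj
          have h6 : T.mul (E a) (T.conj (g b))
              = lam⁻¹ • T.mul (T.mul (g a) (T.conj v)) (T.mul v (T.conj (g b))) := by
            rw [hEa a, map_smul, LinearMap.smul_apply,
              ← T.assoc7 a R' j b ha hRj' hbj _ (hximem a) v hvmem (g b) (hgmem b)]
          -- conj expansions
          have hconjp : T.conj (p b) = β⁻¹ • (α • T.conj (cc b) + T.mul v (T.conj (g b))) := by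
            rw [hpa b, map_smul, map_add, map_smul, T.conj_mul, T.conj_conj]
          have hconjE' : T.conj (E' b)
              = β⁻¹ • (α • T.conj (E b) - T.mul (T.conj v) (T.conj (cc b))) := by
            rw [hE'a b, map_smul, map_sub, map_smul, T.conj_mul]
          have hconjD : T.conj (D b) = T.conj (g b) - T.conj (E b) := by
            rw [hDa b, map_sub]
          rw [hpa a, hE'a a, hDa a, hconjp, hconjE', hconjD]
          simp only [map_smul, map_add, map_sub, LinearMap.smul_apply, LinearMap.add_apply,
            LinearMap.sub_apply, smul_add, smul_sub, smul_smul]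
          rw [h7, h9, h10, h11, h12, h13, h6]
          match_scalars
          · field_simp
            linear_combination (-1 : ℝ) * hβ2
          · ring
          · ring
          · field_simp
            ring_nf
            linear_combination (-1 : ℝ) * hβ2
          · ring
        · -- column b vanishes
          obtain ⟨hE0, hp0, hE'0, hD0⟩ := hz b hb
          rw [hp0, hE'0, hD0, hc0 b hb, hg0 b hb]
          simp [T.sq_zero]
      · -- row a vanishes
        obtain ⟨hE0, hp0, hE'0, hD0⟩ := hz a ha
        rw [hp0, hE'0, hD0, hc0 a ha, hg0 a ha]
        simp
    -- assemble the sums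
    have expand : ∀ f : Fin r → A, T.sq (colv f) = ∑ a, ∑ b, T.mul (f a) (T.conj (f b)) :=
      fun f => T.sq_colv f f
    rw [expand p, expand E', expand D, expand cc, expand g,
      ← Finset.sum_add_distrib, ← Finset.sum_add_distrib, ← Finset.sum_add_distrib]
    refine Finset.sum_congr rfl fun a _ => ?_
    rw [← Finset.sum_add_distrib, ← Finset.sum_add_distrib, ← Finset.sum_add_distrib]
    exact Finset.sum_congr rfl fun b _ => key a b

end TAlgebra

namespace TAlgebra

variable {A : Type*} [AddCommGroup A] [Module ℝ A] {r : ℕ}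

/-- a column (of index `q.1`) supported on rows `< k` (and weakly above the diagonal). -/
def GoodAt (T : TAlgebra A r) (k : ℕ) (q : Fin r × (Fin r → A)) : Prop :=
  (∀ a, q.2 a ∈ T.S a q.1) ∧ (∀ a : Fin r, ¬ ((a : ℕ) < k ∧ a ≤ q.1) → q.2 a = 0)

/-- sum of the squares of a list of columns. -/
def Lsq (T : TAlgebra A r) (L : List (Fin r × (Fin r → A))) : A :=
  (L.map (fun q => T.sq (colv q.2))).sum

variable (T : TAlgebra A r)

lemma chain (R' : Fin r) (L : List (Fin r × (Fin r → A)))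
    (hL : ∀ q ∈ L, T.GoodAt ((R' : ℕ) + 1) q) :
    ∀ (cc : Fin r → A) (α : ℝ), 0 ≤ α → (∀ a, cc a ∈ T.S a R') → cc R' = α • T.e R' →
    (∀ a, ¬ a ≤ R' → cc a = 0) →
    ∃ (p : Fin r → A) (β : ℝ) (L' : List (Fin r × (Fin r → A))),
      0 ≤ β ∧ (∀ a, p a ∈ T.S a R') ∧ p R' = β • T.e R' ∧ (∀ a, ¬ a ≤ R' → p a = 0) ∧
      (β = 0 → p = cc) ∧ α ≤ β ∧
      (∀ q ∈ L', T.GoodAt (R' : ℕ) q) ∧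
      T.sq (colv p) + T.Lsq L' = T.sq (colv cc) + T.Lsq L := by
  induction L with
  | nil =>
    intro cc α hα hmem hdiag h0
    exact ⟨cc, α, [], hα, hmem, hdiag, h0, fun _ => rfl, le_refl α,
      fun q hq => absurd hq List.not_mem_nil, rfl⟩
  | cons q L ih =>
    intro cc α hα hmem hdiag h0
    obtain ⟨hq1, hq2⟩ := hL q List.mem_cons_self
    have hg0 : ∀ a, ¬ a ≤ R' → q.2 a = 0 := by
      intro a ha
      refine hq2 a fun hcon => ha ?_
      have := hcon.1
      exact Fin.le_def.2 (by omega)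
    have hgj : ∀ a : Fin r, ¬ a ≤ q.1 → q.2 a = 0 := fun a ha =>
      hq2 a fun hcon => ha hcon.2
    have hRj : q.2 R' ≠ 0 → R' ≤ q.1 := by
      intro hne
      by_contra hcon
      exact hne (hgj R' hcon)
    obtain ⟨p₁, E', D, β₁, lam, hβ₁, hlam, hβ₁2, hp₁mem, hp₁R, hp₁0, hE'mem, hE'lt,
      hDmem, hDlt, hEDj, hlam0, heq⟩ :=
      T.rotation R' q.1 cc q.2 α hα hmem hdiag h0 hq1 hg0 hgj hRj
    obtain ⟨p, β, L', hβ, hpmem, hpR, hp0, hppcc, hββ₁, hL', heq'⟩ :=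
      ih (fun q' hq' => hL q' (List.mem_cons_of_mem q hq')) p₁ β₁ hβ₁ hp₁mem hp₁R hp₁0
    have hαβ₁ : α ≤ β₁ := by nlinarith
    refine ⟨p, β, (q.1, E') :: (q.1, D) :: L', hβ, hpmem, hpR, hp0, ?_, le_trans hαβ₁ hββ₁,
      ?_, ?_⟩
    · intro hβ0
      have hβ₁0 : β₁ = 0 := le_antisymm (hβ0 ▸ hββ₁) hβ₁
      have hlam' : lam = 0 := by nlinarith
      rw [hppcc hβ0, hlam0 hlam']
    · intro q' hq'
      rcases List.mem_cons.1 hq' with h | h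
      · subst h
        refine ⟨hE'mem, fun a ha => ?_⟩
        by_cases haR : (a : ℕ) < (R' : ℕ)
        · exact (hEDj a fun h' => ha ⟨haR, h'⟩).1
        · exact hE'lt a (fun h' => haR (Fin.lt_def.1 h'))
      rcases List.mem_cons.1 h with h | h
      · subst h
        refine ⟨hDmem, fun a ha => ?_⟩
        by_cases haR : (a : ℕ) < (R' : ℕ)
        · exact (hEDj a fun h' => ha ⟨haR, h'⟩).2
        · exact hDlt a (fun h' => haR (Fin.lt_def.1 h'))
      · exact hL' q' h
    · have e1 : T.Lsq ((q.1, E') :: (q.1, D) :: L')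
          = T.sq (colv E') + (T.sq (colv D) + T.Lsq L') := by
        unfold Lsq
        simp [List.map_cons, List.sum_cons]
      have e2 : T.Lsq (q :: L) = T.sq (colv q.2) + T.Lsq L := by
        unfold Lsq
        simp [List.map_cons, List.sum_cons]
      rw [e1, e2]
      calc T.sq (colv p) + (T.sq (colv E') + (T.sq (colv D) + T.Lsq L'))
          = (T.sq (colv p) + T.Lsq L') + (T.sq (colv E') + T.sq (colv D)) := by abel
        _ = (T.sq (colv p₁) + T.Lsq L) + (T.sq (colv E') + T.sq (colv D)) := by rw [heq']
        _ = (T.sq (colv p₁) + (T.sq (colv E') + T.sq (colv D))) + T.Lsq L := by abel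
        _ = (T.sq (colv cc) + T.sq (colv q.2)) + T.Lsq L := by rw [heq]
        _ = T.sq (colv cc) + (T.sq (colv q.2) + T.Lsq L) := by abel
  
end TAlgebra

namespace TAlgebra

variable {A : Type*} [AddCommGroup A] [Module ℝ A] {r : ℕ} (T : TAlgebra A r)

lemma sq_sum_cols (W : Fin r → Fin r → A) (hW : ∀ j a, W j a ∈ T.S a j) :
    T.sq (∑ j, colv (W j)) = ∑ j, T.sq (colv (W j)) := by
  unfold sq
  rw [map_sum T.conj, T.mul_sum_sum]
  refine Finset.sum_congr rfl fun j _ => ?_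
  rw [Finset.sum_eq_single_of_mem j (Finset.mem_univ j)
    (fun j' _ hne => T.mul_colv_zero (Ne.symm hne) _ _ (hW j) (hW j'))]

lemma EX : ∀ (k : ℕ), k ≤ r → ∀ (W : Fin r → Fin r → A) (δ : Fin r → ℝ)
    (L : List (Fin r × (Fin r → A))),
    (∀ j a, W j a ∈ T.S a j) → (∀ j a : Fin r, ¬ a ≤ j → W j a = 0) →
    (∀ j, W j j = δ j • T.e j) → (∀ j, 0 ≤ δ j) →
    (∀ j : Fin r, (j : ℕ) < k → ∀ a, W j a = 0) → (∀ j, δ j = 0 → ∀ a, W j a = 0) →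
    (∀ q ∈ L, T.GoodAt k q) →
    ∃ (W' : Fin r → Fin r → A) (δ' : Fin r → ℝ),
      (∀ j a, W' j a ∈ T.S a j) ∧ (∀ j a : Fin r, ¬ a ≤ j → W' j a = 0) ∧
      (∀ j, W' j j = δ' j • T.e j) ∧ (∀ j, 0 ≤ δ' j) ∧ (∀ j, δ' j = 0 → ∀ a, W' j a = 0) ∧
      T.sq (∑ j, colv (W' j)) = T.sq (∑ j, colv (W j)) + T.Lsq L := by
  intro k
  induction k with
  | zero =>
    intro _ W δ L hmem htri hdiag hδ _ hprop hL
    refine ⟨W, δ, hmem, htri, hdiag, hδ, hprop, ?_⟩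
    have hz : T.Lsq L = 0 := by
      unfold Lsq
      rw [List.sum_eq_zero]
      intro x hxmem
      obtain ⟨q, hq, rfl⟩ := List.mem_map.1 hxmem
      have : ∀ a, q.2 a = 0 := fun a => (hL q hq).2 a (by omega)
      have hcv : colv q.2 = 0 := by
        unfold TAlgebra.colv
        exact Finset.sum_eq_zero fun a _ => this a
      rw [hcv, T.sq_zero]
    rw [hz, add_zero]
  | succ k ih =>
    intro hk W δ L hmem htri hdiag hδ hzero hprop hL
    have hkr : k < r := hk
    set R' : Fin r := ⟨k, hkr⟩ with hR'_def
    have hR'k : (R' : ℕ) = k := rfl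
    -- apply the chain with the zero column
    obtain ⟨p, β, L', hβ, hpmem, hpR, hp0, hpcc, _, hL', heq⟩ :=
      T.chain R' L (by
        intro q hq
        have := hL q hq
        exact ⟨this.1, fun a ha => this.2 a
          (fun hcon => ha ⟨by have := hcon.1; omega, hcon.2⟩)⟩)
        (fun _ => 0) 0 (le_refl 0) (fun a => (T.S a R').zero_mem) (by rw [zero_smul])
        (fun _ _ => rfl)
    -- the updated triangular system
    set W'' : Fin r → Fin r → A := fun j => if j = R' then p else W j with hW''_def
    set δ'' : Fin r → ℝ := fun j => if j = R' then β else δ j with hδ''_def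
    have hWR' : ∀ a, W R' a = 0 := fun a => hzero R' (by omega) a
    have hcv0 : colv (W R') = 0 := by
      unfold TAlgebra.colv
      exact Finset.sum_eq_zero fun a _ => hWR' a
    have hW''mem : ∀ j a, W'' j a ∈ T.S a j := by
      intro j a
      by_cases h : j = R'
      · subst h; simp only [hW''_def, if_pos rfl]; exact hpmem a
      · simp only [hW''_def, if_neg h]; exact hmem j a
    have hW''tri : ∀ j a : Fin r, ¬ a ≤ j → W'' j a = 0 := by
      intro j a ha
      by_cases h : j = R'
      · subst h; simp only [hW''_def, if_pos rfl]; exact hp0 a ha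
      · simp only [hW''_def, if_neg h]; exact htri j a ha
    have hW''diag : ∀ j, W'' j j = δ'' j • T.e j := by
      intro j
      by_cases h : j = R'
      · subst h; simp only [hW''_def, hδ''_def, if_pos rfl]; exact hpR
      · simp only [hW''_def, hδ''_def, if_neg h]; exact hdiag j
    have hδ''nn : ∀ j, 0 ≤ δ'' j := by
      intro j
      by_cases h : j = R'
      · subst h; simp only [hδ''_def, if_pos rfl]; exact hβ
      · simp only [hδ''_def, if_neg h]; exact hδ j
    have hW''zero : ∀ j : Fin r, (j : ℕ) < k → ∀ a, W'' j a = 0 := by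
      intro j hj a
      have h : j ≠ R' := by
        intro hcon; rw [hcon] at hj; omega
      simp only [hW''_def, if_neg h]
      exact hzero j (by omega) a
    have hW''prop : ∀ j, δ'' j = 0 → ∀ a, W'' j a = 0 := by
      intro j hj a
      by_cases h : j = R'
      · subst h
        simp only [hδ''_def, if_pos rfl] at hj
        simp only [hW''_def, if_pos rfl]
        rw [hpcc hj]
      · simp only [hδ''_def, if_neg h] at hj
        simp only [hW''_def, if_neg h]
        exact hprop j hj a
    obtain ⟨W', δ', h1, h2, h3, h4, h5, h6⟩ :=
      ih (le_of_lt hkr) W'' δ'' L' hW''mem hW''tri hW''diag hδ''nn hW''zero hW''prop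
        (fun q hq => hL' q hq)
    refine ⟨W', δ', h1, h2, h3, h4, h5, ?_⟩
    rw [h6]
    -- sq (Σ colv W'') = sq (Σ colv W) + sq (colv p)
    have hsum'' : (∑ j, colv (W'' j)) = (∑ j, colv (W j)) + colv p := by
      calc (∑ j, colv (W'' j))
          = ∑ j, (if j = R' then colv p else colv (W j)) := by
            refine Finset.sum_congr rfl fun j _ => ?_
            by_cases h : j = R'
            · subst h; simp [hW''_def]
            · simp [hW''_def, h]
        _ = (∑ j ∈ Finset.univ \ {R'}, (if j = R' then colv p else colv (W j)))
              + (if R' = R' then colv p else colv (W R')) :=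
            Finset.sum_eq_sum_sdiff_singleton_add (Finset.mem_univ R') _
        _ = (∑ j ∈ Finset.univ \ {R'}, colv (W j)) + colv p := by
            rw [show (if R' = R' then colv p else colv (W R')) = colv p from if_pos rfl]
            congr 1
            refine Finset.sum_congr rfl fun j hj => ?_
            rw [if_neg (by simpa using (Finset.mem_sdiff.1 hj).2)]
        _ = ((∑ j ∈ Finset.univ \ {R'}, colv (W j)) + colv (W R')) + colv p := by
            rw [hcv0, add_zero]
        _ = (∑ j, colv (W j)) + colv p := by
            rw [← Finset.sum_eq_sum_sdiff_singleton_add (Finset.mem_univ R') (fun j => colv (W j))]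
    rw [hsum'']
    have hcross : T.mul (∑ j, colv (W j)) (T.conj (colv p)) = 0 := by
      have hdist : T.mul (∑ j, colv (W j)) (T.conj (colv p))
          = ∑ j, T.mul (colv (W j)) (T.conj (colv p)) := by
        rw [map_sum T.mul, LinearMap.coe_sum, Finset.sum_apply]
      rw [hdist]
      refine Finset.sum_eq_zero fun j _ => ?_
      by_cases h : j = R'
      · subst h
        rw [hcv0, map_zero, LinearMap.zero_apply]
      · exact T.mul_colv_zero h (W j) p (hmem j) hpmem
    rw [T.sq_add _ _ hcross]
    rw [colv_zero, T.sq_zero, zero_add] at heq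
    rw [add_assoc, heq]

end TAlgebra

namespace TAlgebra

variable {A : Type*} [AddCommGroup A] [Module ℝ A] {r : ℕ} (T : TAlgebra A r)

lemma c_sq (u : A) (i j : Fin r) :
    T.c (T.mul u (T.conj u)) i j = ∑ k, T.mul (T.c u i k) (T.conj (T.c u j k)) := by
  rw [T.c_mul]
  exact Finset.sum_congr rfl fun k _ => by rw [T.c_conj]

lemma unique_proper (s t : A) (hs : T.Proper s) (ht : T.Proper t)
    (h : T.mul s (T.conj s) = T.mul t (T.conj t)) : s = t := by
  have main : ∀ n : ℕ, ∀ j : Fin r, r - n ≤ (j : ℕ) → ∀ i, T.c s i j = T.c t i j := by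
    intro n
    induction n with
    | zero => intro j hj i; exact absurd hj (by have := j.isLt; omega)
    | succ n ihn =>
      intro j hj i
      by_cases hjn : r - n ≤ (j : ℕ)
      · exact ihn j hjn i
      · have hcol : ∀ k : Fin r, j < k → ∀ i', T.c s i' k = T.c t i' k := by
          intro k hk i'
          exact ihn k (by have := Fin.lt_def.1 hk; omega) i'
        -- ρ j s = ρ j t
        have hdiagc : ∀ u : A, u ∈ T.Tplus →
            T.ρ j (T.mul u (T.conj u)) = ∑ k, T.nsq (T.c u j k) := by
          intro u hu
          refine T.ρ_eq_of_c ?_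
          rw [T.c_sq, Finset.sum_smul]
          refine Finset.sum_congr rfl fun k _ => ?_
          exact T.nsq_graded (T.c_mem u j k)
        have hsum_ne : (∑ k ∈ Finset.univ \ {j}, T.nsq (T.c s j k))
            = ∑ k ∈ Finset.univ \ {j}, T.nsq (T.c t j k) := by
          refine Finset.sum_congr rfl fun k hk => ?_
          have hkj : k ≠ j := by simpa using (Finset.mem_sdiff.1 hk).2
          rcases lt_or_gt_of_ne hkj with hlt | hgt
          · rw [hs.1.1 j k hlt, ht.1.1 j k hlt]
          · rw [hcol k hgt j]
        have hρeq : T.ρ j s = T.ρ j t := by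
          have h1 := hdiagc s hs.1
          have h2 := hdiagc t ht.1
          rw [h] at h1
          have h3 : (∑ k, T.nsq (T.c s j k)) = ∑ k, T.nsq (T.c t j k) := by
            rw [← h1, ← h2]
          rw [Finset.sum_eq_sum_sdiff_singleton_add (Finset.mem_univ j),
            Finset.sum_eq_sum_sdiff_singleton_add (Finset.mem_univ j)
              (fun k => T.nsq (T.c t j k)), hsum_ne] at h3
          have h4 : T.nsq (T.c s j j) = T.nsq (T.c t j j) := by linarith
          rw [T.diag_coord, T.diag_coord, T.nsq_smul, T.nsq_smul, T.nsq_e] at h4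
          have hsnn := hs.1.2 j
          have htnn := ht.1.2 j
          nlinarith [h4]
        by_cases hα : T.ρ j s = 0
        · rw [hs.2 j hα i, ht.2 j (by rw [← hρeq]; exact hα) i]
        · -- compare the (i,j) components of the squares
          have hcomp : ∀ u : A, u ∈ T.Tplus →
              T.c (T.mul u (T.conj u)) i j
                = T.ρ j u • T.c u i j
                  + ∑ k ∈ Finset.univ \ {j}, T.mul (T.c u i k) (T.conj (T.c u j k)) := by
            intro u hu
            rw [T.c_sq, Finset.sum_eq_sum_sdiff_singleton_add (Finset.mem_univ j)]
            rw [T.diag_coord u j, map_smul, T.conj_e, map_smul, T.mul_e' (T.c_mem u i j)]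
            abel
          have hsum_ne2 : (∑ k ∈ Finset.univ \ {j}, T.mul (T.c s i k) (T.conj (T.c s j k)))
              = ∑ k ∈ Finset.univ \ {j}, T.mul (T.c t i k) (T.conj (T.c t j k)) := by
            refine Finset.sum_congr rfl fun k hk => ?_
            have hkj : k ≠ j := by simpa using (Finset.mem_sdiff.1 hk).2
            rcases lt_or_gt_of_ne hkj with hlt | hgt
            · simp [hs.1.1 j k hlt, ht.1.1 j k hlt]
            · rw [hcol k hgt j, hcol k hgt i]
          have h5 := hcomp s hs.1
          have h6 := hcomp t ht.1
          rw [h, hsum_ne2] at h5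
          rw [← hρeq] at h6
          have h7 : T.ρ j s • T.c s i j = T.ρ j s • T.c t i j :=
            add_right_cancel (h5.symm.trans h6)
          exact smul_right_injective A hα h7
  rw [← T.c_sum s, ← T.c_sum t]
  refine Finset.sum_congr rfl fun i _ => Finset.sum_congr rfl fun j _ => ?_
  exact main r j (by omega) i

end TAlgebra

namespace TAlgebra

variable {A : Type*} [AddCommGroup A] [Module ℝ A] {r : ℕ} (T : TAlgebra A r)

lemma c_of_cols (W : Fin r → Fin r → A) (hW : ∀ j a, W j a ∈ T.S a j) (i j : Fin r) :
    T.c (∑ j', colv (W j')) i j = W j i := by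
  rw [T.c_finsum]
  have hterm : ∀ j' : Fin r, T.c (colv (W j')) i j = if j = j' then W j' i else 0 := by
    intro j'
    unfold TAlgebra.colv
    rw [T.c_finsum]
    by_cases h : j = j'
    · subst h
      rw [Finset.sum_eq_single_of_mem i (Finset.mem_univ i)
        (fun a _ ha => T.c_ne_row (hW j a) (Ne.symm ha)), T.c_self (hW j i), if_pos rfl]
    · rw [if_neg h]
      exact Finset.sum_eq_zero fun a _ => T.c_ne_col (hW j' a) h
  rw [Finset.sum_congr rfl (fun j' _ => hterm j')]
  simp

end TAlgebra

/-- Every element `x` of the closed homogeneous cone `cl C(A)` of a T-algebra `A` admits a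
factorization `x = tt*` with `t ∈ T₊` proper, and this proper factorization is unique. -/
theorem stmt14 {A : Type*} [AddCommGroup A] [Module ℝ A] {r : ℕ} (T : TAlgebra A r)
    (x : A) (hx : x ∈ T.clCone) :
    ∃! t : A, T.Proper t ∧ x = T.mul t (T.conj t) := by
  obtain ⟨t, ⟨hUT, hnn⟩, hxt⟩ := hx
  classical
  -- all columns of `t`, as a list of column functions
  set L₀ : List (Fin r × (Fin r → A)) :=
    (List.finRange r).map (fun j => (j, fun a => T.c t a j)) with hL₀_def
  have hL₀ : ∀ q ∈ L₀, T.GoodAt r q := by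
    intro q hq
    rw [hL₀_def] at hq
    obtain ⟨j, _, rfl⟩ := List.mem_map.1 hq
    refine ⟨fun a => T.c_mem t a j, fun a ha => ?_⟩
    have hle : ¬ a ≤ j := fun hle => ha ⟨a.isLt, hle⟩
    exact hUT a j (lt_of_not_ge hle)
  obtain ⟨W', δ', h1, h2, h3, h4, h5, h6⟩ :=
    T.EX r (le_refl r) (fun _ _ => 0) (fun _ => 0) L₀
      (fun j a => (T.S a j).zero_mem) (fun _ _ _ => rfl)
      (fun j => by rw [zero_smul]) (fun _ => le_refl 0)
      (fun _ _ _ => rfl) (fun _ _ _ => rfl) hL₀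
  set s : A := ∑ j, TAlgebra.colv (W' j) with hs_def
  -- `Lsq L₀` is exactly `t t*`
  have ht_cols : t = ∑ j, TAlgebra.colv (fun a => T.c t a j) := by
    conv_lhs => rw [← T.c_sum t]
    rw [Finset.sum_comm]
    rfl
  have hLsq : T.Lsq L₀ = T.sq t := by
    conv_rhs => rw [ht_cols]
    rw [T.sq_sum_cols _ (fun j a => T.c_mem t a j)]
    unfold TAlgebra.Lsq
    rw [hL₀_def, List.map_map, Fin.sum_univ_def]
    rfl
  -- the square of s is x
  have hzero_sum : (∑ j : Fin r, TAlgebra.colv (fun _ : Fin r => (0 : A))) = 0 := by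
    rw [TAlgebra.colv_zero]
    simp
  have hsq : T.mul s (T.conj s) = x := by
    have : T.sq s = T.sq t := by
      rw [hs_def, h6, hzero_sum, T.sq_zero, zero_add, hLsq]
    rw [hxt]
    exact this
  -- properties of s
  have hcs : ∀ i j, T.c s i j = W' j i := fun i j => T.c_of_cols W' h1 i j
  have hρs : ∀ j, T.ρ j s = δ' j := fun j => T.ρ_eq_of_c (by rw [hcs j j, h3 j])
  have hsTplus : s ∈ T.Tplus := by
    constructor
    · intro i j hji
      rw [hcs i j]
      exact h2 j i (not_le_of_gt hji)
    · intro i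
      rw [hρs i]
      exact h4 i
  have hsProper : T.Proper s := by
    refine ⟨hsTplus, fun i hρi k => ?_⟩
    rw [hcs k i]
    exact h5 i (by rw [← hρs i]; exact hρi) k
  refine ⟨s, ⟨hsProper, hsq.symm⟩, ?_⟩
  rintro y ⟨hyP, hyx⟩
  exact T.unique_proper y s hyP hsProper (by rw [← hyx, hsq])
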